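/- For n ≥ 1 and p ≥ 1: p^2 · ∑_{k=1}^{n} C(n+1, k+1) y^{n-k} B_{k,p} = (p+1)·y^{n+1} + p(n+1)·y^n - (p+1)·B_{n+1,p-1}(1+y), as an identity of polynomials in y. -/

import Mathlib

def pBernoulli : ℕ → ℕ → ℚ
  | 0, _ => 1
  | n + 1, p => p * pBernoulli n p - ((p + 1 : ℚ) ^ 2 / (p + 2)) * pBernoulli n (p + 1)

/-- The p-Bernoulli polynomials `B_{n,p}(x) = ∑ C(n,k) x^{n-k} B_{k,p}`. -/
def pBernoulliPoly (n p : ℕ) (x : ℚ) : ℚ :=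
  ∑ k ∈ Finset.range (n + 1), (n.choose k : ℚ) * x ^ (n - k) * pBernoulli k p

/-!
Umbrally, `B_{m,q}(x) = L_q((X + x)^m)` for the linear functional `L_q : X^k ↦ B_{k,q}`.
The defining recurrence says `L_q(X f) = q L_q(f) - (q+1)²/(q+2) L_{q+1}(f)`, which gives
`B_{m+1,q}(x) = (x + q) B_{m,q}(x) - (q+1)²/(q+2) B_{m,q+1}(x)`, while the binomial theorem
gives the addition formula `B_{m,q}(x + y) = ∑ C(m,k) y^{m-k} B_{k,q}(x)`. From the former,
induction on `m` yields `B_{m+1,q}(1) = -(q+1)²/(q+2) B_{m,q+1}` for `m ≥ 1` (plus `q + 1` when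
`m = 0`); inserting these values into the addition formula at `x = 1` gives the identity with
`p = q + 1`.
-/

open Finset Polynomial

section Umbral

variable {R : Type*} [CommSemiring R] (b : ℕ → R)

def umbralEval : R[X] →ₗ[R] R :=
  lsum fun k => LinearMap.mulRight R (b k)

theorem umbralEval_monomial (k : ℕ) (a : R) : umbralEval b (monomial k a) = a * b k := by
  simp [umbralEval]

theorem umbralEval_X_pow (k : ℕ) : umbralEval b (X ^ k) = b k := by
  rw [X_pow_eq_monomial, umbralEval_monomial, one_mul]

theorem umbralEval_C_mul (a : R) (f : R[X]) : umbralEval b (C a * f) = a * umbralEval b f := by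
  rw [C_mul', map_smul, smul_eq_mul]

theorem umbralEval_X_add_C_pow (x : R) (m : ℕ) :
    umbralEval b ((X + C x) ^ m)
      = ∑ k ∈ range (m + 1), (m.choose k : R) * x ^ (m - k) * b k := by
  rw [add_pow, map_sum]
  refine sum_congr rfl fun k _ => ?_
  rw [← C_pow, ← C_eq_natCast, mul_assoc, ← C_mul, mul_comm, umbralEval_C_mul,
    umbralEval_X_pow]
  ring

theorem umbralEval_X_add_C_add_pow (x y : R) (m : ℕ) :
    umbralEval b ((X + C (x + y)) ^ m)
      = ∑ k ∈ range (m + 1), (m.choose k : R) * y ^ (m - k) * umbralEval b ((X + C x) ^ k) := by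
  rw [C_add, ← add_assoc, add_pow, map_sum]
  refine sum_congr rfl fun k _ => ?_
  rw [← C_pow, ← C_eq_natCast, mul_assoc, ← C_mul, mul_comm, umbralEval_C_mul]
  ring

end Umbral

theorem pBernoulliPoly_eq_umbralEval (m q : ℕ) (x : ℚ) :
    pBernoulliPoly m q x = umbralEval (pBernoulli · q) ((X + C x) ^ m) :=
  (umbralEval_X_add_C_pow _ x m).symm

theorem umbralEval_pBernoulli_X_mul (q : ℕ) (f : ℚ[X]) :
    umbralEval (pBernoulli · q) (X * f)
      = q * umbralEval (pBernoulli · q) f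
        - (q + 1 : ℚ) ^ 2 / (q + 2) * umbralEval (pBernoulli · (q + 1)) f := by
  induction f using Polynomial.induction_on' with
  | add f g hf hg => rw [mul_add, map_add, map_add, map_add, hf, hg]; ring
  | monomial k a =>
    rw [X_mul_monomial, umbralEval_monomial, umbralEval_monomial, umbralEval_monomial, pBernoulli]
    ring

theorem pBernoulliPoly_succ (m q : ℕ) (x : ℚ) :
    pBernoulliPoly (m + 1) q x
      = (x + q) * pBernoulliPoly m q x
        - (q + 1 : ℚ) ^ 2 / (q + 2) * pBernoulliPoly m (q + 1) x := by
  simp only [pBernoulliPoly_eq_umbralEval]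
  rw [pow_succ', add_mul, map_add, umbralEval_pBernoulli_X_mul, umbralEval_C_mul]
  ring

theorem pBernoulliPoly_add (m q : ℕ) (x y : ℚ) :
    pBernoulliPoly m q (x + y)
      = ∑ k ∈ range (m + 1), (m.choose k : ℚ) * y ^ (m - k) * pBernoulliPoly k q x := by
  simp only [pBernoulliPoly_eq_umbralEval]
  exact umbralEval_X_add_C_add_pow _ x y m

theorem pBernoulliPoly_zero (q : ℕ) (x : ℚ) : pBernoulliPoly 0 q x = 1 := by
  simp [pBernoulliPoly, pBernoulli]

theorem pBernoulliPoly_succ_one (m q : ℕ) :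
    pBernoulliPoly (m + 1) q 1
      = (if m = 0 then (q + 1 : ℚ) else 0)
        - (q + 1 : ℚ) ^ 2 / (q + 2) * pBernoulli m (q + 1) := by
  induction m generalizing q with
  | zero =>
    rw [pBernoulliPoly_succ, pBernoulliPoly_zero, pBernoulliPoly_zero, if_pos rfl, pBernoulli]
    ring
  | succ m ih =>
    rw [pBernoulliPoly_succ, ih, ih, pBernoulli]
    push_cast
    -- the constant terms cancel because `(q+1)²/(q+2) · (q+2) = (q+1)²`
    split_ifs <;> field_simp <;> ring

theorem pBernoulliPoly_succ_one_add (n q : ℕ) (y : ℚ) :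
    pBernoulliPoly (n + 1) q (1 + y)
      = y ^ (n + 1) + (q + 1) * (n + 1) * y ^ n
        - (q + 1 : ℚ) ^ 2 / (q + 2)
          * ∑ k ∈ range (n + 1),
              ((n + 1).choose (k + 1) : ℚ) * y ^ (n - k) * pBernoulli k (q + 1) := by
  rw [pBernoulliPoly_add, sum_range_succ', pBernoulliPoly_zero, mul_sum]
  simp only [pBernoulliPoly_succ_one, mul_sub, sum_sub_distrib, mul_ite, mul_zero, sum_ite_eq',
    mem_range, Nat.zero_lt_succ, if_true, zero_add, Nat.choose_zero_right, Nat.choose_one_right,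
    mul_left_comm _ ((q + 1 : ℚ) ^ 2 / (q + 2))]
  push_cast
  ring

theorem pBernoulli_sum_identity_general (n p : ℕ) (hp : 1 ≤ p) (y : ℚ) :
    (p : ℚ) ^ 2 * ∑ k ∈ Finset.Icc 1 n, ((n + 1).choose (k + 1) : ℚ) * y ^ (n - k) * pBernoulli k p
      = (p + 1 : ℚ) * y ^ (n + 1) + (p : ℚ) * (n + 1) * y ^ n
        - (p + 1 : ℚ) * pBernoulliPoly (n + 1) (p - 1) (1 + y) := by
  obtain ⟨q, rfl⟩ := Nat.exists_eq_add_of_le' hp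
  rw [Nat.add_sub_cancel, pBernoulliPoly_succ_one_add, Nat.range_succ_eq_Icc_zero,
    Icc_eq_cons_Ioc (Nat.zero_le n), sum_cons, ← Icc_add_one_left_eq_Ioc, zero_add,
    Nat.choose_one_right, Nat.sub_zero, pBernoulli.eq_1]
  generalize ∑ k ∈ Icc 1 n, ((n + 1).choose (k + 1) : ℚ) * y ^ (n - k) * pBernoulli k (q + 1)
    = S
  push_cast
  field_simp
  ring

theorem pBernoulli_sum_identity (n p : ℕ) (hn : 1 ≤ n) (hp : 1 ≤ p) (y : ℚ) :
    (p : ℚ) ^ 2 * ∑ k ∈ Finset.Icc 1 n, ((n + 1).choose (k + 1) : ℚ) * y ^ (n - k) * pBernoulli k p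
      = (p + 1 : ℚ) * y ^ (n + 1) + (p : ℚ) * (n + 1) * y ^ n
        - (p + 1 : ℚ) * pBernoulliPoly (n + 1) (p - 1) (1 + y) :=
  pBernoulli_sum_identity_general n p hp y
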